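/- arXiv:2008.01653 — 4 statements merged into one kernel-verified Lean document; each statement's English description precedes it below -/
import Mathlib

section
/- The parallelogram with vertices (1,0), (0,√3/2), (-1,0), (0,-√3/2) is contained in the regular hexagon with vertices (cos(2πj/6), sin(2πj/6)) for j = 0,...,5, and the hexagon is contained in the image of this parallelogram under the homothety with center the origin and ratio 3/2. -/
open Real Set Pointwise

noncomputable def Pgon (n : ℕ) : Set (ℝ × ℝ) :=
  convexHull ℝ {p : ℝ × ℝ | ∃ i : ℕ, i < n ∧
    p = (Real.cos (2 * Real.pi * i / n), Real.sin (2 * Real.pi * i / n))}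

noncomputable def Par0 : Set (ℝ × ℝ) :=
  convexHull ℝ {((1 : ℝ), (0 : ℝ)), (0, Real.sqrt 3 / 2), (-1, 0), (0, -(Real.sqrt 3 / 2))}

private lemma hexG :
    {p : ℝ × ℝ | ∃ i : ℕ, i < 6 ∧
      p = (Real.cos (2 * Real.pi * i / (6:ℕ)), Real.sin (2 * Real.pi * i / (6:ℕ)))} =
    {((1:ℝ), (0:ℝ)), (1/2, Real.sqrt 3/2), (-(1/2), Real.sqrt 3/2), (-1, 0),
      (-(1/2), -(Real.sqrt 3/2)), (1/2, -(Real.sqrt 3/2))} := by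
  have c1 : Real.cos (2*Real.pi*1/6) = 1/2 := by
    have : (2*Real.pi*1/6 : ℝ) = Real.pi/3 := by ring
    rw [this, Real.cos_pi_div_three]
  have s1 : Real.sin (2*Real.pi*1/6) = Real.sqrt 3/2 := by
    have : (2*Real.pi*1/6 : ℝ) = Real.pi/3 := by ring
    rw [this, Real.sin_pi_div_three]
  have c2 : Real.cos (2*Real.pi*2/6) = -(1/2) := by
    have : (2*Real.pi*2/6 : ℝ) = Real.pi - Real.pi/3 := by ring
    rw [this, Real.cos_pi_sub, Real.cos_pi_div_three]
  have s2 : Real.sin (2*Real.pi*2/6) = Real.sqrt 3/2 := by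
    have : (2*Real.pi*2/6 : ℝ) = Real.pi - Real.pi/3 := by ring
    rw [this, Real.sin_pi_sub, Real.sin_pi_div_three]
  have c3 : Real.cos (2*Real.pi*3/6) = -1 := by
    have : (2*Real.pi*3/6 : ℝ) = Real.pi := by ring
    rw [this, Real.cos_pi]
  have s3 : Real.sin (2*Real.pi*3/6) = 0 := by
    have : (2*Real.pi*3/6 : ℝ) = Real.pi := by ring
    rw [this, Real.sin_pi]
  have c4 : Real.cos (2*Real.pi*4/6) = -(1/2) := by
    have : (2*Real.pi*4/6 : ℝ) = 2*Real.pi - (Real.pi - Real.pi/3) := by ring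
    rw [this]
    simp [Real.cos_sub, Real.cos_pi_sub, Real.cos_pi_div_three]
  have s4 : Real.sin (2*Real.pi*4/6) = -(Real.sqrt 3/2) := by
    have : (2*Real.pi*4/6 : ℝ) = 2*Real.pi - (Real.pi - Real.pi/3) := by ring
    rw [this]
    simp [Real.sin_sub, Real.sin_pi_sub, Real.sin_pi_div_three]
  have c5 : Real.cos (2*Real.pi*5/6) = 1/2 := by
    have : (2*Real.pi*5/6 : ℝ) = 2*Real.pi - Real.pi/3 := by ring
    rw [this]
    simp [Real.cos_sub, Real.cos_pi_div_three]
  have s5 : Real.sin (2*Real.pi*5/6) = -(Real.sqrt 3/2) := by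
    have : (2*Real.pi*5/6 : ℝ) = 2*Real.pi - Real.pi/3 := by ring
    rw [this]
    simp [Real.sin_sub, Real.sin_pi_div_three]
  ext p
  constructor
  · rintro ⟨i, hi, rfl⟩
    interval_cases i
    · simp
    · push_cast
      rw [c1, s1]; simp
    · push_cast
      rw [c2, s2]; simp
    · push_cast
      rw [c3, s3]; simp
    · push_cast
      rw [c4, s4]; simp
    · push_cast
      rw [c5, s5]; simp
  · intro hp
    simp only [mem_insert_iff, mem_singleton_iff] at hp
    rcases hp with rfl | rfl | rfl | rfl | rfl | rfl
    · exact ⟨0, by norm_num⟩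
    · exact ⟨1, by push_cast; rw [c1, s1]; norm_num⟩
    · exact ⟨2, by push_cast; rw [c2, s2]; norm_num⟩
    · exact ⟨3, by push_cast; rw [c3, s3]; norm_num⟩
    · exact ⟨4, by push_cast; rw [c4, s4]; norm_num⟩
    · exact ⟨5, by push_cast; rw [c5, s5]; norm_num⟩

theorem stmt0 :
    Par0 ⊆ Pgon 6 ∧ Pgon 6 ⊆ (fun x : ℝ × ℝ => ((3 : ℝ) / 2) • x) '' Par0 := by
  have hP : Pgon 6 = convexHull ℝ
      ({((1:ℝ), (0:ℝ)), (1/2, Real.sqrt 3/2), (-(1/2), Real.sqrt 3/2), (-1, 0),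
        (-(1/2), -(Real.sqrt 3/2)), (1/2, -(Real.sqrt 3/2))} : Set (ℝ × ℝ)) := by
    rw [Pgon, hexG]
  have hconvH : Convex ℝ (Pgon 6) := convex_convexHull ℝ _
  have hv : ∀ q ∈ ({((1:ℝ), (0:ℝ)), (1/2, Real.sqrt 3/2), (-(1/2), Real.sqrt 3/2), (-1, 0),
      (-(1/2), -(Real.sqrt 3/2)), (1/2, -(Real.sqrt 3/2))} : Set (ℝ × ℝ)), q ∈ Pgon 6 := by
    intro q hq
    rw [hP]
    exact subset_convexHull ℝ _ hq
  constructor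
  · -- Par0 ⊆ Pgon 6
    apply convexHull_min _ hconvH
    intro p hp
    simp only [mem_insert_iff, mem_singleton_iff] at hp
    rcases hp with rfl | rfl | rfl | rfl
    · exact hv _ (by simp)
    · have h1 : ((1:ℝ)/2, Real.sqrt 3/2) ∈ Pgon 6 := hv _ (by simp)
      have h2 : (-(1/2 : ℝ), Real.sqrt 3/2) ∈ Pgon 6 := hv _ (by simp)
      have := hconvH h1 h2 (by norm_num : (0:ℝ) ≤ 1/2) (by norm_num : (0:ℝ) ≤ 1/2) (by norm_num)
      convert this using 1
      simp only [Prod.smul_mk, Prod.mk_add_mk, smul_eq_mul, Prod.mk.injEq]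
      constructor <;> ring
    · exact hv _ (by simp)
    · have h1 : (-(1/2 : ℝ), -(Real.sqrt 3/2)) ∈ Pgon 6 := hv _ (by simp)
      have h2 : ((1:ℝ)/2, -(Real.sqrt 3/2)) ∈ Pgon 6 := hv _ (by simp)
      have := hconvH h1 h2 (by norm_num : (0:ℝ) ≤ 1/2) (by norm_num : (0:ℝ) ≤ 1/2) (by norm_num)
      convert this using 1
      simp only [Prod.smul_mk, Prod.mk_add_mk, smul_eq_mul, Prod.mk.injEq]
      constructor <;> ring
  · -- Pgon 6 ⊆ (3/2) • Par0
    have himg : (fun x : ℝ × ℝ => ((3 : ℝ) / 2) • x) '' Par0 =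
        convexHull ℝ (((3:ℝ)/2) • ({((1 : ℝ), (0 : ℝ)), (0, Real.sqrt 3 / 2), (-1, 0),
          (0, -(Real.sqrt 3 / 2))} : Set (ℝ × ℝ))) := by
      rw [convexHull_smul]; rfl
    rw [himg, hP]
    set T : Set (ℝ × ℝ) := ((3:ℝ)/2) • ({((1 : ℝ), (0 : ℝ)), (0, Real.sqrt 3 / 2), (-1, 0),
          (0, -(Real.sqrt 3 / 2))} : Set (ℝ × ℝ)) with hT
    have hconvT : Convex ℝ (convexHull ℝ T) := convex_convexHull ℝ _
    have tA : ((3:ℝ)/2, (0:ℝ)) ∈ convexHull ℝ T := by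
      apply subset_convexHull
      have : ((3:ℝ)/2, (0:ℝ)) = ((3:ℝ)/2) • (((1:ℝ), (0:ℝ)) : ℝ × ℝ) := by
        simp only [Prod.smul_mk, smul_eq_mul, Prod.mk.injEq]; constructor <;> ring
      rw [hT, this]; exact smul_mem_smul_set (by simp)
    have tB : ((0:ℝ), 3*Real.sqrt 3/4) ∈ convexHull ℝ T := by
      apply subset_convexHull
      have : ((0:ℝ), 3*Real.sqrt 3/4) = ((3:ℝ)/2) • (((0:ℝ), Real.sqrt 3/2) : ℝ × ℝ) := by
        simp only [Prod.smul_mk, smul_eq_mul, Prod.mk.injEq]; constructor <;> ring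
      rw [hT, this]; exact smul_mem_smul_set (by simp)
    have tC : (-(3/2 : ℝ), (0:ℝ)) ∈ convexHull ℝ T := by
      apply subset_convexHull
      have : (-(3/2:ℝ), (0:ℝ)) = ((3:ℝ)/2) • (((-1:ℝ), (0:ℝ)) : ℝ × ℝ) := by
        simp only [Prod.smul_mk, smul_eq_mul, Prod.mk.injEq]; constructor <;> ring
      rw [hT, this]; exact smul_mem_smul_set (by simp)
    have tD : ((0:ℝ), -(3*Real.sqrt 3/4)) ∈ convexHull ℝ T := by
      apply subset_convexHull
      have : ((0:ℝ), -(3*Real.sqrt 3/4)) = ((3:ℝ)/2) • (((0:ℝ), -(Real.sqrt 3/2)) : ℝ × ℝ) := by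
        simp only [Prod.smul_mk, smul_eq_mul, Prod.mk.injEq]; constructor <;> ring
      rw [hT, this]; exact smul_mem_smul_set (by simp)
    apply convexHull_min _ hconvT
    intro p hp
    simp only [mem_insert_iff, mem_singleton_iff] at hp
    rcases hp with rfl | rfl | rfl | rfl | rfl | rfl
    · have := hconvT tA tC (by norm_num : (0:ℝ) ≤ 5/6) (by norm_num : (0:ℝ) ≤ 1/6) (by norm_num)
      convert this using 1
      simp only [Prod.smul_mk, Prod.mk_add_mk, smul_eq_mul, Prod.mk.injEq]
      constructor <;> ring
    · have := hconvT tA tB (by norm_num : (0:ℝ) ≤ 1/3) (by norm_num : (0:ℝ) ≤ 2/3) (by norm_num)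
      convert this using 1
      simp only [Prod.smul_mk, Prod.mk_add_mk, smul_eq_mul, Prod.mk.injEq]
      constructor <;> ring
    · have := hconvT tC tB (by norm_num : (0:ℝ) ≤ 1/3) (by norm_num : (0:ℝ) ≤ 2/3) (by norm_num)
      convert this using 1
      simp only [Prod.smul_mk, Prod.mk_add_mk, smul_eq_mul, Prod.mk.injEq]
      constructor <;> ring
    · have := hconvT tC tA (by norm_num : (0:ℝ) ≤ 5/6) (by norm_num : (0:ℝ) ≤ 1/6) (by norm_num)
      convert this using 1
      simp only [Prod.smul_mk, Prod.mk_add_mk, smul_eq_mul, Prod.mk.injEq]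
      constructor <;> ring
    · have := hconvT tC tD (by norm_num : (0:ℝ) ≤ 1/3) (by norm_num : (0:ℝ) ≤ 2/3) (by norm_num)
      convert this using 1
      simp only [Prod.smul_mk, Prod.mk_add_mk, smul_eq_mul, Prod.mk.injEq]
      constructor <;> ring
    · have := hconvT tA tD (by norm_num : (0:ℝ) ≤ 1/3) (by norm_num : (0:ℝ) ≤ 2/3) (by norm_num)
      convert this using 1
      simp only [Prod.smul_mk, Prod.mk_add_mk, smul_eq_mul, Prod.mk.injEq]
      constructor <;> ring
end

section
/- For all b in the interval [0, √3/5], the value h(b) = (b² + 4√3·b + 9)/(4b² + 2√3·b + 6) is at least 3/2, with equality if and only if b = 0 or b = √3/5. -/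
open Real Set

theorem stmt1 (b : ℝ) (hb : b ∈ Icc (0 : ℝ) (Real.sqrt 3 / 5)) :
    (3 : ℝ) / 2 ≤ (b ^ 2 + 4 * Real.sqrt 3 * b + 9) / (4 * b ^ 2 + 2 * Real.sqrt 3 * b + 6) ∧
    ((b ^ 2 + 4 * Real.sqrt 3 * b + 9) / (4 * b ^ 2 + 2 * Real.sqrt 3 * b + 6) = 3 / 2 ↔
      b = 0 ∨ b = Real.sqrt 3 / 5) := by
  obtain ⟨h0, h1⟩ := hb
  have hs : Real.sqrt 3 > 0 := Real.sqrt_pos.mpr (by norm_num)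
  have hD : (0:ℝ) < 4 * b ^ 2 + 2 * Real.sqrt 3 * b + 6 := by nlinarith
  constructor
  · rw [le_div_iff₀ hD]
    nlinarith
  · rw [div_eq_iff (ne_of_gt hD)]
    constructor
    · intro h
      have key : b * (Real.sqrt 3 - 5 * b) = 0 := by nlinarith
      rcases mul_eq_zero.mp key with h | h
      · left; exact h
      · right; linarith
    · rintro (rfl | rfl) <;> ring
end

section
/- Let j ≥ 1, set k = sin(π/(4j))/(cos(π/(4j)) − 1), and define h(b) = √2·(k − b)/(k·(b² + 1)). Then for all b ∈ [0, tan(π/(8j))], h(b) ≥ √2, with equality exactly when b = 0 or b = tan(π/(8j)). -/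
open Real Set

theorem stmt14 (j : ℕ) (hj : 1 ≤ j) :
    let k : ℝ := Real.sin (Real.pi / (4 * j)) / (Real.cos (Real.pi / (4 * j)) - 1)
    ∀ b ∈ Icc (0 : ℝ) (Real.tan (Real.pi / (8 * j))),
      Real.sqrt 2 ≤ Real.sqrt 2 * (k - b) / (k * (b ^ 2 + 1)) ∧
      (Real.sqrt 2 * (k - b) / (k * (b ^ 2 + 1)) = Real.sqrt 2 ↔
        b = 0 ∨ b = Real.tan (Real.pi / (8 * j))) := by
  intro k b hb
  have hj1 : (1:ℝ) ≤ (j:ℝ) := by exact_mod_cast hj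
  have hjpos : (0:ℝ) < (j:ℝ) := by linarith
  set x : ℝ := Real.pi / (8 * j) with hx
  have hx0 : 0 < x := by
    apply div_pos Real.pi_pos; positivity
  have hxlt : x < Real.pi / 2 := by
    rw [hx, div_lt_div_iff₀ (by positivity) (by norm_num)]
    nlinarith [Real.pi_pos]
  have hangle : Real.pi / (4 * (j:ℝ)) = 2 * x := by
    rw [hx]; field_simp; ring
  set s : ℝ := Real.sin x with hsdef
  set c : ℝ := Real.cos x with hcdef
  have hs : 0 < s := Real.sin_pos_of_pos_of_lt_pi hx0 (by linarith [Real.pi_pos])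
  have hc : 0 < c := Real.cos_pos_of_mem_Ioo ⟨by linarith, hxlt⟩
  have hpyth : s ^ 2 + c ^ 2 = 1 := Real.sin_sq_add_cos_sq x
  have hk : k = -(c / s) := by
    show Real.sin (Real.pi / (4 * j)) / (Real.cos (Real.pi / (4 * j)) - 1) = -(c/s)
    rw [hangle, Real.sin_two_mul, Real.cos_two_mul]
    rw [show 2 * Real.cos x ^ 2 - 1 - 1 = -(2 * s ^ 2) by nlinarith]
    rw [← hsdef, ← hcdef]
    field_simp
  have htan : Real.tan x = s / c := Real.tan_eq_sin_div_cos x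
  have hbc : b * c ≤ s := by
    have h2 := hb.2
    rw [htan] at h2
    exact (le_div_iff₀ hc).mp h2
  have hb0 : 0 ≤ b := hb.1
  have hden : c * (b ^ 2 + 1) ≠ 0 := by positivity
  have key : Real.sqrt 2 * (k - b) / (k * (b ^ 2 + 1)) =
      Real.sqrt 2 + Real.sqrt 2 * (b * (s - b * c)) / (c * (b ^ 2 + 1)) := by
    rw [hk]
    field_simp
    ring
  have hnn : 0 ≤ Real.sqrt 2 * (b * (s - b * c)) / (c * (b ^ 2 + 1)) := by
    apply div_nonneg _ (by positivity)
    apply mul_nonneg (Real.sqrt_nonneg 2)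
    apply mul_nonneg hb0 (by linarith)
  constructor
  · rw [key]; linarith
  · rw [key]
    constructor
    · intro h
      have h0 : Real.sqrt 2 * (b * (s - b * c)) / (c * (b ^ 2 + 1)) = 0 := by linarith
      have h1 : b * (s - b * c) = 0 := by
        have hsq : Real.sqrt 2 ≠ 0 := by positivity
        rw [div_eq_zero_iff] at h0
        rcases h0 with h0 | h0
        · rcases mul_eq_zero.mp h0 with h2 | h2
          · exact absurd h2 hsq
          · exact h2
        · exact absurd h0 hden
      rcases mul_eq_zero.mp h1 with h2 | h2
      · left; exact h2
      · right
        rw [htan]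
        have : b * c = s := by linarith
        field_simp [ne_of_gt hc]
        linarith
    · rintro (rfl | h)
      · simp
      · rw [h, htan]
        have : (s / c) * (s - (s / c) * c) = 0 := by
          field_simp
          ring
        rw [this]
        simp
end

section
/- If a parallelogram P centered at the origin is inscribed in the regular 8j-gon P₈ⱼ (j ≥ 1) and some positive homothet λ·P of P is circumscribed about P₈ⱼ, then P is a square. -/
open Real Set

noncomputable def USq : Set (ℝ × ℝ) :=
  convexHull ℝ {((1 : ℝ), (1 : ℝ)), (1, -1), (-1, -1), (-1, 1)}


/-- Boundary exclusion lemma. -/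
lemma excl {K : Set (ℝ × ℝ)} (hK : Convex ℝ K) (h0 : (0:ℝ×ℝ) ∈ K)
    {x w : ℝ × ℝ} (hx : x ∈ K) (hx' : -x ∈ K) (hw : w ∈ K) (hw' : -w ∈ K)
    {e : ℝ × ℝ} (he : e ∉ interior K) :
    |x.1 * w.2 - x.2 * w.1| ≤ |e.1 * w.2 - e.2 * w.1| + |x.1 * e.2 - x.2 * e.1| := by
  by_contra hcon
  push_neg at hcon
  apply he
  set U : Set (ℝ × ℝ) :=
    {y | |y.1 * w.2 - y.2 * w.1| + |x.1 * y.2 - x.2 * y.1| < |x.1 * w.2 - x.2 * w.1|} with hU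
  have hopen : IsOpen U := by
    have hcont : Continuous (fun y : ℝ × ℝ =>
        |y.1 * w.2 - y.2 * w.1| + |x.1 * y.2 - x.2 * y.1|) := by
      fun_prop
    exact isOpen_lt hcont continuous_const
  have hDne : x.1 * w.2 - x.2 * w.1 ≠ 0 := by
    intro h
    rw [h] at hcon
    simp at hcon
    have := abs_nonneg (e.1 * w.2 - e.2 * w.1)
    have := abs_nonneg (x.1 * e.2 - x.2 * e.1)
    linarith [hcon.trans_le (by positivity : (0:ℝ) ≤ |e.1 * w.2 - e.2 * w.1| + |x.1 * e.2 - x.2 * e.1|)]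
  have hUK : U ⊆ K := by
    intro y hy
    simp only [hU, mem_setOf_eq] at hy
    set Dxw := x.1 * w.2 - x.2 * w.1 with hDxw
    set σ := (y.1 * w.2 - y.2 * w.1) / Dxw with hσ
    set ρ := (x.1 * y.2 - x.2 * y.1) / Dxw with hρ
    have hy1 : y = σ • x + ρ • w := by
      have h1 : y.1 * Dxw = (y.1 * w.2 - y.2 * w.1) * x.1 + (x.1 * y.2 - x.2 * y.1) * w.1 := by ring
      have h2 : y.2 * Dxw = (y.1 * w.2 - y.2 * w.1) * x.2 + (x.1 * y.2 - x.2 * y.1) * w.2 := by ring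
      have e1 : y.1 = σ * x.1 + ρ * w.1 := by
        rw [hσ, hρ]; field_simp; linarith [h1]
      have e2 : y.2 = σ * x.2 + ρ * w.2 := by
        rw [hσ, hρ]; field_simp; linarith [h2]
      ext <;> simp [e1, e2]
    have hsr : |σ| + |ρ| < 1 := by
      rw [hσ, hρ, abs_div, abs_div]
      rw [← add_div, div_lt_one (abs_pos.2 hDne)]
      exact hy
    -- y is a convex combination of ±x, ±w, 0
    have hpx : (if 0 ≤ σ then x else -x) ∈ K := by split <;> assumption
    have hpw : (if 0 ≤ ρ then w else -w) ∈ K := by split <;> assumption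
    have hσx : σ • x = |σ| • (if 0 ≤ σ then x else -x) := by
      split_ifs with h
      · rw [abs_of_nonneg h]
      · rw [abs_of_neg (not_le.1 h)]; simp
    have hρw : ρ • w = |ρ| • (if 0 ≤ ρ then w else -w) := by
      split_ifs with h
      · rw [abs_of_nonneg h]
      · rw [abs_of_neg (not_le.1 h)]; simp
    rw [hy1, hσx, hρw]
    rcases eq_or_lt_of_le (by positivity : (0:ℝ) ≤ |σ| + |ρ|) with hz | hz
    · have h1 : |σ| = 0 := by cases abs_nonneg σ |>.lt_or_eq with
        | inl h => nlinarith [abs_nonneg ρ]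
        | inr h => exact h.symm
      have h2 : |ρ| = 0 := by nlinarith [abs_nonneg ρ, abs_nonneg σ]
      rw [h1, h2]; simpa using h0
    · set s := |σ| with hs
      set r := |ρ| with hr
      have hmid : (s / (s + r)) • (if 0 ≤ σ then x else -x) + (r / (s + r)) • (if 0 ≤ ρ then w else -w) ∈ K := by
        apply hK hpx hpw (by positivity) (by positivity)
        field_simp
      have := hK.smul_mem_of_zero_mem h0 hmid
        (⟨by positivity, le_of_lt hsr⟩ : s + r ∈ Icc (0:ℝ) 1)
      rw [smul_add, smul_smul, smul_smul] at this
      have hne : s + r ≠ 0 := ne_of_gt hz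
      rw [mul_div_cancel₀ _ hne, mul_div_cancel₀ _ hne] at this
      exact this
  exact mem_interior.2 ⟨U, hUK, hopen, hcon⟩

lemma core {α β c D lam t : ℝ} (hα : 0 < α) (hβ : 0 < β) (hD : 0 < D) (hlam : 0 < lam)
    (ht0 : 0 ≤ t) (ht1 : t ≤ 1) (hc : 0 ≤ c)
    (hP : α * β - c ^ 2 = D ^ 2)
    (hI1 : α + c ≤ lam * D) (hI2 : β + c ≤ lam * D)
    (hI3 : c + t * α + (1 - t) * β ≤ D)
    (hM1 : D ≤ α + c) (hM2 : D ≤ β + c)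
    (hN1 : lam * (t ^ 2 * α + 2 * t * (1 - t) * c + (1 - t) ^ 2 * β)
        ≤ t * α + (1 - t) * c + (1 - t) * D)
    (hN2 : lam * (t ^ 2 * α + 2 * t * (1 - t) * c + (1 - t) ^ 2 * β)
        ≤ t * c + (1 - t) * β + t * D) :
    c = 0 ∧ α = β := by
  have key : α + c = D ∧ β + c = D := by
    have h1 : t * (α + c - D) + (1 - t) * (β + c - D) ≤ 0 := by nlinarith
    have h2 : 0 ≤ t * (α + c - D) := mul_nonneg ht0 (by linarith)
    have h3 : 0 ≤ (1 - t) * (β + c - D) := mul_nonneg (by linarith) (by linarith)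
    by_cases htz : t = 0
    · subst htz
      have hbc : β + c = D := by nlinarith
      have hlam1 : lam ≤ 1 := by nlinarith
      constructor
      · nlinarith
      · exact hbc
    by_cases hto : t = 1
    · subst hto
      have hac : α + c = D := by nlinarith
      have hlam1 : lam ≤ 1 := by nlinarith
      exact ⟨hac, by nlinarith⟩
    · have htpos : 0 < t := lt_of_le_of_ne ht0 (Ne.symm htz)
      have htlt : t < 1 := lt_of_le_of_ne ht1 hto
      have e1 : t * (α + c - D) = 0 := le_antisymm (by linarith) h2
      have e2 : (1 - t) * (β + c - D) = 0 := le_antisymm (by linarith) h3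
      have f1 : α + c - D = 0 := by
        rcases mul_eq_zero.mp e1 with h | h
        · exact absurd h (ne_of_gt htpos)
        · exact h
      have f2 : β + c - D = 0 := by
        rcases mul_eq_zero.mp e2 with h | h
        · exact absurd h (ne_of_gt (by linarith))
        · exact h
      exact ⟨by linarith, by linarith⟩
  obtain ⟨k1, k2⟩ := key
  have hα' : α = D - c := by linarith
  have hβ' : β = D - c := by linarith
  rw [hα', hβ'] at hP
  have h2dc : (2 * D) * c = (2 * D) * 0 := by rw [mul_zero]; linear_combination -hP
  have hc0 : c = 0 := mul_left_cancel₀ (by positivity) h2dc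
  exact ⟨hc0, by rw [hα', hβ']⟩

lemma Nbound (a b : ℝ × ℝ) (lam : ℝ) (hlam : 0 ≤ lam) (x : ℝ × ℝ)
    (hx : x ∈ (fun y : ℝ × ℝ => lam • y) '' (convexHull ℝ {a, b, -a, -b})) :
    |x.1 * b.2 - x.2 * b.1| + |a.1 * x.2 - a.2 * x.1| ≤ lam * |a.1 * b.2 - a.2 * b.1| := by
  obtain ⟨y, hy, rfl⟩ := hx
  set f : ℝ × ℝ → ℝ := fun z => |z.1 * b.2 - z.2 * b.1| + |a.1 * z.2 - a.2 * z.1| with hf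
  have hconv : ConvexOn ℝ Set.univ f := by
    constructor
    · exact convex_univ
    · intro z _ w _ p q hp hq hpq
      have h1 : (p • z + q • w).1 = p * z.1 + q * w.1 := by simp
      have h2 : (p • z + q • w).2 = p * z.2 + q * w.2 := by simp
      simp only [hf, h1, h2]
      have e1 : (p * z.1 + q * w.1) * b.2 - (p * z.2 + q * w.2) * b.1
          = p * (z.1 * b.2 - z.2 * b.1) + q * (w.1 * b.2 - w.2 * b.1) := by ring
      have e2 : a.1 * (p * z.2 + q * w.2) - a.2 * (p * z.1 + q * w.1)
          = p * (a.1 * z.2 - a.2 * z.1) + q * (a.1 * w.2 - a.2 * w.1) := by ring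
      rw [e1, e2]
      calc |p * (z.1 * b.2 - z.2 * b.1) + q * (w.1 * b.2 - w.2 * b.1)|
            + |p * (a.1 * z.2 - a.2 * z.1) + q * (a.1 * w.2 - a.2 * w.1)|
          ≤ (|p * (z.1 * b.2 - z.2 * b.1)| + |q * (w.1 * b.2 - w.2 * b.1)|)
            + (|p * (a.1 * z.2 - a.2 * z.1)| + |q * (a.1 * w.2 - a.2 * w.1)|) := by
            gcongr <;> exact abs_add_le _ _
        _ = p * f z + q * f w := by
            simp only [abs_mul, abs_of_nonneg hp, abs_of_nonneg hq, hf]; ring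
  obtain ⟨v, hv, hle⟩ := hconv.exists_ge_of_mem_convexHull (subset_univ _) hy
  have hvD : f v = |a.1 * b.2 - a.2 * b.1| := by
    simp only [mem_insert_iff, mem_singleton_iff] at hv
    rcases hv with h | h | h | h
    · rw [h]; simp only [hf]
      rw [show a.1 * a.2 - a.2 * a.1 = 0 by ring, abs_zero, add_zero]
    · rw [h]; simp only [hf]
      rw [show b.1 * b.2 - b.2 * b.1 = 0 by ring, abs_zero, zero_add]
    · rw [h]; simp only [hf, Prod.fst_neg, Prod.snd_neg]
      rw [show -a.1 * b.2 - -a.2 * b.1 = -(a.1 * b.2 - a.2 * b.1) by ring,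
        show a.1 * -a.2 - a.2 * -a.1 = 0 by ring, abs_neg, abs_zero, add_zero]
    · rw [h]; simp only [hf, Prod.fst_neg, Prod.snd_neg]
      rw [show (-b.1) * b.2 - (-b.2) * b.1 = 0 by ring,
        show a.1 * -b.2 - a.2 * -b.1 = -(a.1 * b.2 - a.2 * b.1) by ring, abs_neg, abs_zero, zero_add]
  have hsc1 : (lam • y).1 = lam * y.1 := rfl
  have hsc2 : (lam • y).2 = lam * y.2 := rfl
  rw [hsc1, hsc2,
    show lam * y.1 * b.2 - lam * y.2 * b.1 = lam * (y.1 * b.2 - y.2 * b.1) by ring,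
    show a.1 * (lam * y.2) - a.2 * (lam * y.1) = lam * (a.1 * y.2 - a.2 * y.1) by ring,
    abs_mul, abs_mul, abs_of_nonneg hlam, ← mul_add]
  have : f y ≤ |a.1 * b.2 - a.2 * b.1| := hvD ▸ hle
  exact mul_le_mul_of_nonneg_left this hlam
namespace PgonAux

def gen (n : ℕ) : Set (ℝ × ℝ) :=
  {p : ℝ × ℝ | ∃ i : ℕ, i < n ∧
    p = (Real.cos (2 * Real.pi * i / n), Real.sin (2 * Real.pi * i / n))}

lemma pgon_eq (n : ℕ) : Pgon n = convexHull ℝ (gen n) := rfl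

lemma gen_finite (n : ℕ) : (gen n).Finite := by
  apply Set.Finite.subset (Set.finite_range (fun i : Fin n =>
    ((Real.cos (2 * Real.pi * i / n), Real.sin (2 * Real.pi * i / n)) : ℝ × ℝ)))
  rintro p ⟨i, hi, rfl⟩
  exact ⟨⟨i, hi⟩, rfl⟩

lemma pgon_closed (n : ℕ) : IsClosed (Pgon n) :=
  ((gen_finite n).isCompact_convexHull (𝕜 := ℝ)).isClosed

lemma pgon_convex (n : ℕ) : Convex ℝ (Pgon n) := convex_convexHull ℝ _

-- angle shift lemma
lemma angle_shift (n : ℕ) (hn : 0 < n) (i k : ℕ) :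
    2 * π * (((i + k) % n : ℕ) : ℝ) / n
      = 2 * π * i / n + 2 * π * k / n + ((-(((i + k) / n : ℕ) : ℤ)) : ℤ) * (2 * π) := by
  have hqm := Nat.mod_add_div (i + k) n
  set m := (i + k) % n with hm
  set q := (i + k) / n with hq
  have hcast : (m : ℝ) = (i : ℝ) + (k : ℝ) - (n : ℝ) * (q : ℝ) := by
    have h' : (m : ℝ) + (n : ℝ) * (q : ℝ) = (i : ℝ) + (k : ℝ) := by exact_mod_cast congrArg (Nat.cast : ℕ → ℝ) hqm
    linarith
  have hnR : (n : ℝ) ≠ 0 := Nat.cast_ne_zero.2 hn.ne'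
  rw [hcast]
  push_cast
  field_simp
  ring

lemma gen_mem (n : ℕ) (i : ℕ) (hi : i < n) :
    ((Real.cos (2 * Real.pi * i / n), Real.sin (2 * Real.pi * i / n)) : ℝ × ℝ) ∈ gen n :=
  ⟨i, hi, rfl⟩

-- rotation by π/2 maps gen to gen, for n = 8*j
lemma gen_rot (j : ℕ) (hj : 1 ≤ j) {p : ℝ × ℝ} (hp : p ∈ gen (8 * j)) :
    ((-p.2, p.1) : ℝ × ℝ) ∈ gen (8 * j) := by
  obtain ⟨i, hi, rfl⟩ := hp
  set n := 8 * j with hn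
  have hn0 : 0 < n := by omega
  refine ⟨(i + 2 * j) % n, Nat.mod_lt _ hn0, ?_⟩
  have key := angle_shift n hn0 i (2 * j)
  have hjj : 2 * π * (2 * j : ℕ) / n = π / 2 := by
    have : (n : ℝ) = 8 * j := by push_cast [hn]; ring
    rw [this]
    have hjR : (j : ℝ) ≠ 0 := Nat.cast_ne_zero.2 (by omega)
    push_cast
    field_simp
    ring
  rw [hjj] at key
  have hc : Real.cos (2 * π * (((i + 2 * j) % n : ℕ) : ℝ) / n) = - Real.sin (2 * π * i / n) := by
    rw [key, Real.cos_add_int_mul_two_pi, Real.cos_add_pi_div_two]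
  have hs : Real.sin (2 * π * (((i + 2 * j) % n : ℕ) : ℝ) / n) = Real.cos (2 * π * i / n) := by
    rw [key, Real.sin_add_int_mul_two_pi, Real.sin_add_pi_div_two]
  simp only
  rw [hc, hs]

-- negation
lemma gen_neg (j : ℕ) (hj : 1 ≤ j) {p : ℝ × ℝ} (hp : p ∈ gen (8 * j)) :
    -p ∈ gen (8 * j) := by
  obtain ⟨i, hi, rfl⟩ := hp
  set n := 8 * j with hn
  have hn0 : 0 < n := by omega
  refine ⟨(i + 4 * j) % n, Nat.mod_lt _ hn0, ?_⟩
  have key := angle_shift n hn0 i (4 * j)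
  have hjj : 2 * π * (4 * j : ℕ) / n = π := by
    have : (n : ℝ) = 8 * j := by push_cast [hn]; ring
    rw [this]
    have hjR : (j : ℝ) ≠ 0 := Nat.cast_ne_zero.2 (by omega)
    push_cast
    field_simp
    ring
  rw [hjj] at key
  have hc : Real.cos (2 * π * (((i + 4 * j) % n : ℕ) : ℝ) / n) = - Real.cos (2 * π * i / n) := by
    rw [key, Real.cos_add_int_mul_two_pi, Real.cos_add_pi]
  have hs : Real.sin (2 * π * (((i + 4 * j) % n : ℕ) : ℝ) / n) = - Real.sin (2 * π * i / n) := by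
    rw [key, Real.sin_add_int_mul_two_pi, Real.sin_add_pi]
  have : -((Real.cos (2 * π * i / n), Real.sin (2 * π * i / n)) : ℝ × ℝ)
      = ((- Real.cos (2 * π * i / n), - Real.sin (2 * π * i / n)) : ℝ × ℝ) := rfl
  rw [this, ← hc, ← hs]

-- the rotation as a linear map
noncomputable def Jmap : (ℝ × ℝ) →ₗ[ℝ] (ℝ × ℝ) :=
  LinearMap.prod (-(LinearMap.snd ℝ ℝ ℝ)) (LinearMap.fst ℝ ℝ ℝ)

lemma Jmap_apply (x : ℝ × ℝ) : Jmap x = (-x.2, x.1) := rfl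

lemma pgon_rot (j : ℕ) (hj : 1 ≤ j) {x : ℝ × ℝ} (hx : x ∈ Pgon (8 * j)) :
    ((-x.2, x.1) : ℝ × ℝ) ∈ Pgon (8 * j) := by
  rw [pgon_eq] at hx ⊢
  rw [← Jmap_apply]
  have h1 : Jmap x ∈ Jmap '' (convexHull ℝ (gen (8 * j))) := ⟨x, hx, rfl⟩
  rw [Jmap.image_convexHull] at h1
  refine convexHull_mono ?_ h1
  rintro p ⟨q, hq, rfl⟩
  rw [Jmap_apply]
  exact gen_rot j hj hq

lemma pgon_neg (j : ℕ) (hj : 1 ≤ j) {x : ℝ × ℝ} (hx : x ∈ Pgon (8 * j)) :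
    -x ∈ Pgon (8 * j) := by
  rw [pgon_eq] at hx ⊢
  have h1 : -x ∈ (fun y : ℝ × ℝ => -y) '' (convexHull ℝ (gen (8 * j))) := ⟨x, hx, rfl⟩
  rw [show (fun y : ℝ × ℝ => -y) = ⇑(-(LinearMap.id (R := ℝ) (M := ℝ × ℝ))) from rfl] at h1
  rw [LinearMap.image_convexHull] at h1
  refine convexHull_mono ?_ h1
  rintro p ⟨q, hq, rfl⟩
  exact gen_neg j hj hq

lemma pgon_zero (j : ℕ) (hj : 1 ≤ j) : (0 : ℝ × ℝ) ∈ Pgon (8 * j) := by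
  set n := 8 * j with hn
  have hn0 : 0 < n := by omega
  have h1 : ((1 : ℝ), (0 : ℝ)) ∈ gen n := by
    refine ⟨0, hn0, ?_⟩
    norm_num
  have h2 : ((-1 : ℝ), (0 : ℝ)) ∈ gen n := by
    refine ⟨4 * j, by omega, ?_⟩
    have : 2 * π * ((4 * j : ℕ) : ℝ) / n = π := by
      rw [hn]
      have hjR : (j : ℝ) ≠ 0 := Nat.cast_ne_zero.2 (by omega)
      push_cast
      field_simp
      ring
    rw [this]
    norm_num
  have hseg := (pgon_convex n) (subset_convexHull ℝ _ h1) (subset_convexHull ℝ _ h2)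
    (by norm_num : (0:ℝ) ≤ 1/2) (by norm_num : (0:ℝ) ≤ 1/2) (by norm_num)
  have : ((1:ℝ)/2) • (((1:ℝ), (0:ℝ)) : ℝ × ℝ) + ((1:ℝ)/2) • (((-1:ℝ), (0:ℝ)) : ℝ × ℝ)
      = (0 : ℝ × ℝ) := by
    ext <;> simp <;> norm_num
  rw [this] at hseg
  exact hseg

end PgonAux

lemma main_aux {C : Set (ℝ × ℝ)} (hconv : Convex ℝ C) (h0 : (0:ℝ×ℝ) ∈ C)
    (hJ : ∀ x ∈ C, ((-x.2, x.1) : ℝ × ℝ) ∈ C)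
    (hneg : ∀ x ∈ C, -x ∈ C)
    {a b : ℝ × ℝ} (ha : a ∈ C) (hb : b ∈ C)
    (ha' : a ∉ interior C) (hb' : b ∉ interior C)
    {lam t : ℝ} (hlam : 0 < lam) (ht0 : 0 ≤ t) (ht1 : t ≤ 1)
    (hD : 0 < a.1 * b.2 - a.2 * b.1)
    (hc : 0 ≤ a.1 * b.1 + a.2 * b.2)
    (hz : lam • (t • a + (1 - t) • b) ∈ C)
    (hsub : ∀ x ∈ C, |x.1 * b.2 - x.2 * b.1| + |a.1 * x.2 - a.2 * x.1|
        ≤ lam * (a.1 * b.2 - a.2 * b.1)) :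
    a.1 * b.1 + a.2 * b.2 = 0 ∧ a.1 ^ 2 + a.2 ^ 2 = b.1 ^ 2 + b.2 ^ 2 := by
  set α := a.1 ^ 2 + a.2 ^ 2 with hαd
  set β := b.1 ^ 2 + b.2 ^ 2 with hβd
  set c := a.1 * b.1 + a.2 * b.2 with hcd
  set D := a.1 * b.2 - a.2 * b.1 with hDd
  have hP : α * β - c ^ 2 = D ^ 2 := by rw [hαd, hβd, hcd, hDd]; ring
  have hβ0 : 0 ≤ β := by positivity
  have hα0 : 0 ≤ α := by positivity
  have hα : 0 < α := by nlinarith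
  have hβ : 0 < β := by nlinarith
  -- the point z and its rotation
  set z := lam • (t • a + (1 - t) • b) with hzd
  have hz1 : z.1 = lam * (t * a.1 + (1 - t) * b.1) := rfl
  have hz2 : z.2 = lam * (t * a.2 + (1 - t) * b.2) := rfl
  have hJa : ((-a.2, a.1) : ℝ × ℝ) ∈ C := hJ a ha
  have hJb : ((-b.2, b.1) : ℝ × ℝ) ∈ C := hJ b hb
  have hJz : ((-z.2, z.1) : ℝ × ℝ) ∈ C := hJ z hz
  -- I1
  have hI1 : α + c ≤ lam * D := by
    have := hsub _ hJa
    simp only at this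
    rw [show (-a.2) * b.2 - a.1 * b.1 = -c by rw [hcd]; ring,
      show a.1 * a.1 - a.2 * (-a.2) = α by rw [hαd]; ring,
      abs_neg, abs_of_nonneg hc, abs_of_nonneg hα0] at this
    linarith
  -- I2
  have hI2 : β + c ≤ lam * D := by
    have := hsub _ hJb
    simp only at this
    rw [show (-b.2) * b.2 - b.1 * b.1 = -β by rw [hβd]; ring,
      show a.1 * b.1 - a.2 * (-b.2) = c by rw [hcd]; ring,
      abs_neg, abs_of_nonneg hc, abs_of_nonneg hβ0] at this
    linarith
  -- I3
  have hI3 : c + t * α + (1 - t) * β ≤ D := by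
    have h := hsub _ hJz
    simp only at h
    rw [hz1, hz2] at h
    rw [show -(lam * (t * a.2 + (1 - t) * b.2)) * b.2 - lam * (t * a.1 + (1 - t) * b.1) * b.1
        = -(lam * (t * c + (1 - t) * β)) by rw [hcd, hβd]; ring,
      show a.1 * (lam * (t * a.1 + (1 - t) * b.1)) - a.2 * -(lam * (t * a.2 + (1 - t) * b.2))
        = lam * (t * α + (1 - t) * c) by rw [hαd, hcd]; ring, abs_neg] at h
    have e1 : 0 ≤ lam * (t * c + (1 - t) * β) :=
      mul_nonneg hlam.le (add_nonneg (mul_nonneg ht0 hc) (mul_nonneg (by linarith) hβ0))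
    have e2 : 0 ≤ lam * (t * α + (1 - t) * c) :=
      mul_nonneg hlam.le (add_nonneg (mul_nonneg ht0 hα0) (mul_nonneg (by linarith) hc))
    rw [abs_of_nonneg e1, abs_of_nonneg e2] at h
    have h' : lam * (c + t * α + (1 - t) * β) ≤ lam * D := by linarith
    exact (mul_le_mul_iff_right₀ hlam).mp h'
  -- M1
  have hM1 : D ≤ α + c := by
    have h := excl hconv h0 hJb (hneg _ hJb) hJa (hneg _ hJa) ha'
    simp only at h
    rw [show (-b.2) * a.1 - b.1 * (-a.2) = -D by rw [hDd]; ring,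
      show a.1 * a.1 - a.2 * (-a.2) = α by rw [hαd]; ring,
      show (-b.2) * a.2 - b.1 * a.1 = -c by rw [hcd]; ring,
      abs_neg, abs_neg, abs_of_nonneg hD.le, abs_of_nonneg hα0, abs_of_nonneg hc] at h
    exact h
  -- M2
  have hM2 : D ≤ β + c := by
    have h := excl hconv h0 hJa (hneg _ hJa) hJb (hneg _ hJb) hb'
    simp only at h
    rw [show (-a.2) * b.1 - a.1 * (-b.2) = D by rw [hDd]; ring,
      show b.1 * b.1 - b.2 * (-b.2) = β by rw [hβd]; ring,
      show (-a.2) * b.2 - a.1 * b.1 = -c by rw [hcd]; ring,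
      abs_neg, abs_of_nonneg hD.le, abs_of_nonneg hβ0, abs_of_nonneg hc] at h
    exact h
  -- N1, N2
  have hQz : z.1 * z.1 - z.2 * (-z.2) = lam * (lam * (t ^ 2 * α + 2 * t * (1 - t) * c + (1 - t) ^ 2 * β)) := by
    rw [hz1, hz2, hαd, hcd, hβd]; ring
  have hQnn : (0:ℝ) ≤ lam * (lam * (t ^ 2 * α + 2 * t * (1 - t) * c + (1 - t) ^ 2 * β)) := by
    rw [← hQz]; nlinarith [sq_nonneg z.1, sq_nonneg z.2]
  have hN1 : lam * (t ^ 2 * α + 2 * t * (1 - t) * c + (1 - t) ^ 2 * β)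
      ≤ t * α + (1 - t) * c + (1 - t) * D := by
    have h := excl hconv h0 hz (hneg _ hz) hJz (hneg _ hJz) ha'
    simp only at h
    rw [hQz, abs_of_nonneg hQnn] at h
    rw [show a.1 * z.1 - a.2 * (-z.2) = a.1 * z.1 + a.2 * z.2 by ring] at h
    rw [hz1, hz2,
      show a.1 * (lam * (t * a.1 + (1 - t) * b.1)) + a.2 * (lam * (t * a.2 + (1 - t) * b.2))
        = lam * (t * α + (1 - t) * c) by rw [hαd, hcd]; ring,
      show lam * (t * a.1 + (1 - t) * b.1) * a.2 - lam * (t * a.2 + (1 - t) * b.2) * a.1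
        = -(lam * ((1 - t) * D)) by rw [hDd]; ring, abs_neg] at h
    have e1 : 0 ≤ lam * (t * α + (1 - t) * c) :=
      mul_nonneg hlam.le (add_nonneg (mul_nonneg ht0 hα0) (mul_nonneg (by linarith) hc))
    have e2 : 0 ≤ lam * ((1 - t) * D) :=
      mul_nonneg hlam.le (mul_nonneg (by linarith) hD.le)
    rw [abs_of_nonneg e1, abs_of_nonneg e2] at h
    have h' : lam * (lam * (t ^ 2 * α + 2 * t * (1 - t) * c + (1 - t) ^ 2 * β))
        ≤ lam * (t * α + (1 - t) * c + (1 - t) * D) := by linarith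
    exact (mul_le_mul_iff_right₀ hlam).mp h'
  have hN2 : lam * (t ^ 2 * α + 2 * t * (1 - t) * c + (1 - t) ^ 2 * β)
      ≤ t * c + (1 - t) * β + t * D := by
    have h := excl hconv h0 hz (hneg _ hz) hJz (hneg _ hJz) hb'
    simp only at h
    rw [hQz, abs_of_nonneg hQnn] at h
    rw [show b.1 * z.1 - b.2 * (-z.2) = b.1 * z.1 + b.2 * z.2 by ring] at h
    rw [hz1, hz2,
      show b.1 * (lam * (t * a.1 + (1 - t) * b.1)) + b.2 * (lam * (t * a.2 + (1 - t) * b.2))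
        = lam * (t * c + (1 - t) * β) by rw [hcd, hβd]; ring,
      show lam * (t * a.1 + (1 - t) * b.1) * b.2 - lam * (t * a.2 + (1 - t) * b.2) * b.1
        = lam * (t * D) by rw [hDd]; ring] at h
    have e1 : 0 ≤ lam * (t * c + (1 - t) * β) :=
      mul_nonneg hlam.le (add_nonneg (mul_nonneg ht0 hc) (mul_nonneg (by linarith) hβ0))
    have e2 : 0 ≤ lam * (t * D) :=
      mul_nonneg hlam.le (mul_nonneg ht0 hD.le)
    rw [abs_of_nonneg e1, abs_of_nonneg e2] at h
    have h' : lam * (lam * (t ^ 2 * α + 2 * t * (1 - t) * c + (1 - t) ^ 2 * β))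
        ≤ lam * (t * c + (1 - t) * β + t * D) := by linarith
    exact (mul_le_mul_iff_right₀ hlam).mp h'
  exact core hα hβ hD hlam ht0 ht1 hc hP hI1 hI2 hI3 hM1 hM2 hN1 hN2

open PgonAux in
theorem stmt16 (j : ℕ) (hj : 1 ≤ j) (T : (ℝ × ℝ) ≃ₗ[ℝ] (ℝ × ℝ)) (lam : ℝ) (hlam : 0 < lam)
    (hvert : T (1, 1) ∈ frontier (Pgon (8 * j)) ∧ T (1, -1) ∈ frontier (Pgon (8 * j)) ∧
      T (-1, -1) ∈ frontier (Pgon (8 * j)) ∧ T (-1, 1) ∈ frontier (Pgon (8 * j)))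
    (hsub : Pgon (8 * j) ⊆ (fun x => lam • x) '' (⇑T '' USq))
    (hsides :
      (((fun x => lam • x) '' (⇑T '' segment ℝ (1, 1) (1, -1)) ∩ Pgon (8 * j)).Nonempty ∧
       ((fun x => lam • x) '' (⇑T '' segment ℝ (1, -1) (-1, -1)) ∩ Pgon (8 * j)).Nonempty ∧
       ((fun x => lam • x) '' (⇑T '' segment ℝ (-1, -1) (-1, 1)) ∩ Pgon (8 * j)).Nonempty ∧
       ((fun x => lam • x) '' (⇑T '' segment ℝ (-1, 1) (1, 1)) ∩ Pgon (8 * j)).Nonempty)) :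
    let e₁ : ℝ × ℝ := T (1, 1) - T (1, -1)
    let e₂ : ℝ × ℝ := T (1, -1) - T (-1, -1)
    e₁.1 ^ 2 + e₁.2 ^ 2 = e₂.1 ^ 2 + e₂.2 ^ 2 ∧ e₁.1 * e₂.1 + e₁.2 * e₂.2 = 0 := by
  set C := Pgon (8 * j) with hCdef
  set a := T (1, 1) with had
  set b := T (1, -1) with hbd
  obtain ⟨hva, hvb, hvna, hvnb⟩ := hvert
  have hTnn : T (-1, -1) = -a := by
    rw [had, show ((-1, -1) : ℝ × ℝ) = -(1, 1) by norm_num [Prod.ext_iff], map_neg]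
  have hTnb : T (-1, 1) = -b := by
    rw [hbd, show ((-1, 1) : ℝ × ℝ) = -(1, -1) by norm_num [Prod.ext_iff], map_neg]
  rw [hTnn] at hvna
  rw [hTnb] at hvnb
  -- basic facts about C
  have hCc : Convex ℝ C := pgon_convex _
  have hCcl : IsClosed C := pgon_closed _
  have h0 : (0 : ℝ × ℝ) ∈ C := pgon_zero j hj
  have hJC : ∀ x ∈ C, ((-x.2, x.1) : ℝ × ℝ) ∈ C := fun x hx => pgon_rot j hj hx
  have hnegC : ∀ x ∈ C, -x ∈ C := fun x hx => pgon_neg j hj hx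
  have memC : ∀ {v : ℝ × ℝ}, v ∈ frontier C → v ∈ C := by
    intro v hv
    have := frontier_subset_closure (s := C) hv
    rwa [hCcl.closure_eq] at this
  have notint : ∀ {v : ℝ × ℝ}, v ∈ frontier C → v ∉ interior C := fun hv => hv.2
  have haC : a ∈ C := memC hva
  have hbC : b ∈ C := memC hvb
  have hnaC : -a ∈ C := memC hvna
  have hnbC : -b ∈ C := memC hvnb
  have ha' : a ∉ interior C := notint hva
  have hb' : b ∉ interior C := notint hvb
  have hna' : -a ∉ interior C := notint hvna
  have hnb' : -b ∉ interior C := notint hvnb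
  -- the image of USq
  have himg : ⇑T '' USq = convexHull ℝ {a, b, -a, -b} := by
    have h := T.toLinearMap.image_convexHull
      ({((1:ℝ), (1:ℝ)), (1, -1), (-1, -1), (-1, 1)} : Set (ℝ × ℝ))
    simp only [LinearEquiv.coe_coe] at h
    unfold USq
    rw [h]
    congr 1
    rw [Set.image_insert_eq, Set.image_insert_eq, Set.image_insert_eq, Set.image_singleton]
    rw [← had, ← hbd, hTnn, hTnb]
  -- master subset inequality
  have hmaster : ∀ x ∈ C, |x.1 * b.2 - x.2 * b.1| + |a.1 * x.2 - a.2 * x.1|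
      ≤ lam * |a.1 * b.2 - a.2 * b.1| := by
    intro x hx
    apply Nbound a b lam hlam.le
    have := hsub hx
    rwa [himg] at this
  -- D is nonzero
  have hDne : a.1 * b.2 - a.2 * b.1 ≠ 0 := by
    intro hD0
    have hx2 : ((b.2 - a.2, b.2 + a.2) : ℝ × ℝ) = (0 : ℝ × ℝ) := by
      apply T.injective
      have e1 : ((b.2 - a.2, b.2 + a.2) : ℝ × ℝ) = b.2 • ((1:ℝ), (1:ℝ)) - a.2 • ((1:ℝ), (-1:ℝ)) := by
        norm_num [Prod.ext_iff, Prod.smul_fst, Prod.smul_snd]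
      rw [e1, map_sub, map_smul, map_smul, ← had, ← hbd, map_zero]
      have c1 : (b.2 • a - a.2 • b).1 = b.2 * a.1 - a.2 * b.1 := rfl
      have c2 : (b.2 • a - a.2 • b).2 = b.2 * a.2 - a.2 * b.2 := rfl
      rw [Prod.ext_iff, c1, c2]
      simp only [Prod.fst_zero, Prod.snd_zero]
      constructor
      · linarith [hD0]
      · ring
    have hx1 : ((b.1 - a.1, b.1 + a.1) : ℝ × ℝ) = (0 : ℝ × ℝ) := by
      apply T.injective
      have e1 : ((b.1 - a.1, b.1 + a.1) : ℝ × ℝ) = b.1 • ((1:ℝ), (1:ℝ)) - a.1 • ((1:ℝ), (-1:ℝ)) := by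
        norm_num [Prod.ext_iff, Prod.smul_fst, Prod.smul_snd]
      rw [e1, map_sub, map_smul, map_smul, ← had, ← hbd, map_zero]
      have c1 : (b.1 • a - a.1 • b).1 = b.1 * a.1 - a.1 * b.1 := rfl
      have c2 : (b.1 • a - a.1 • b).2 = b.1 * a.2 - a.1 * b.2 := rfl
      rw [Prod.ext_iff, c1, c2]
      simp only [Prod.fst_zero, Prod.snd_zero]
      constructor
      · ring
      · linarith [hD0]
    have ea2 : a.2 = 0 := by
      have h1 := congrArg Prod.fst hx2
      have h2 := congrArg Prod.snd hx2
      simp at h1 h2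
      linarith
    have ea1 : a.1 = 0 := by
      have h1 := congrArg Prod.fst hx1
      have h2 := congrArg Prod.snd hx1
      simp at h1 h2
      linarith
    have : a = (0 : ℝ × ℝ) := by
      rw [Prod.ext_iff]
      exact ⟨ea1, ea2⟩
    have h11 : ((1, 1) : ℝ × ℝ) = (0 : ℝ × ℝ) := by
      apply T.injective
      rw [← had, this, map_zero]
    have := congrArg Prod.fst h11
    norm_num at this
  intro e₁ e₂
  have key : a.1 * b.1 + a.2 * b.2 = 0 ∧ a.1 ^ 2 + a.2 ^ 2 = b.1 ^ 2 + b.2 ^ 2 := by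
    rcases hDne.lt_or_gt with hDneg | hDpos
    · -- det(a,b) < 0 : use pairs (b, a) or (a, -b)
      rcases le_or_gt 0 (a.1 * b.1 + a.2 * b.2) with hc | hc
      · -- pair (b, a), contact from side 1
        rcases hsides.1 with ⟨p, ⟨q, ⟨w, hw, rfl⟩, rfl⟩, hpC⟩
        rcases hw with ⟨σ, τ, hσ, hτ, hστ, rfl⟩
        have hTw : T (σ • ((1:ℝ), (1:ℝ)) + τ • ((1:ℝ), (-1:ℝ))) = τ • b + (1 - τ) • a := by
          rw [map_add, map_smul, map_smul, ← had, ← hbd, show σ = 1 - τ by linarith, add_comm]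
        rw [hTw] at hpC
        have hD' : 0 < b.1 * a.2 - b.2 * a.1 := by linarith
        have hsub' : ∀ x ∈ C, |x.1 * a.2 - x.2 * a.1| + |b.1 * x.2 - b.2 * x.1|
            ≤ lam * (b.1 * a.2 - b.2 * a.1) := by
          intro x hx
          have h := hmaster x hx
          rw [show a.1 * x.2 - a.2 * x.1 = -(x.1 * a.2 - x.2 * a.1) by ring, abs_neg,
            show x.1 * b.2 - x.2 * b.1 = -(b.1 * x.2 - b.2 * x.1) by ring, abs_neg,
            show |a.1 * b.2 - a.2 * b.1| = b.1 * a.2 - b.2 * a.1 by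
              rw [abs_of_neg hDneg]; ring] at h
          linarith
        have hres := main_aux hCc h0 hJC hnegC hbC haC hb' ha' hlam hτ (by linarith) hD'
          (by linarith) hpC hsub'
        constructor
        · linarith [hres.1]
        · linarith [hres.2]
      · -- pair (a, -b), contact from side 4
        rcases hsides.2.2.2 with ⟨p, ⟨q, ⟨w, hw, rfl⟩, rfl⟩, hpC⟩
        rcases hw with ⟨σ, τ, hσ, hτ, hστ, rfl⟩
        have hTw : T (σ • ((-1:ℝ), (1:ℝ)) + τ • ((1:ℝ), (1:ℝ))) = τ • a + (1 - τ) • (-b) := by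
          rw [map_add, map_smul, map_smul, ← had, hTnb, show σ = 1 - τ by linarith, add_comm]
        rw [hTw] at hpC
        have hD' : 0 < a.1 * (-b).2 - a.2 * (-b).1 := by
          simp only [Prod.fst_neg, Prod.snd_neg]
          linarith
        have hc' : 0 ≤ a.1 * (-b).1 + a.2 * (-b).2 := by
          simp only [Prod.fst_neg, Prod.snd_neg]
          linarith
        have hsub' : ∀ x ∈ C, |x.1 * (-b).2 - x.2 * (-b).1| + |a.1 * x.2 - a.2 * x.1|
            ≤ lam * (a.1 * (-b).2 - a.2 * (-b).1) := by
          intro x hx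
          have h := hmaster x hx
          simp only [Prod.fst_neg, Prod.snd_neg]
          rw [show x.1 * -b.2 - x.2 * -b.1 = -(x.1 * b.2 - x.2 * b.1) by ring, abs_neg]
          rw [show |a.1 * b.2 - a.2 * b.1| = a.1 * -b.2 - a.2 * -b.1 by
              rw [abs_of_neg hDneg]; ring] at h
          linarith
        have hres := main_aux hCc h0 hJC hnegC haC hnbC ha' hnb' hlam hτ (by linarith) hD'
          hc' hpC hsub'
        obtain ⟨h1, h2⟩ := hres
        simp only [Prod.fst_neg, Prod.snd_neg] at h1 h2
        constructor
        · linarith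
        · nlinarith [h2]
    · -- det(a,b) > 0 : use pairs (a, b) or (b, -a)
      rcases le_or_gt 0 (a.1 * b.1 + a.2 * b.2) with hc | hc
      · -- pair (a, b), contact from side 1
        rcases hsides.1 with ⟨p, ⟨q, ⟨w, hw, rfl⟩, rfl⟩, hpC⟩
        rcases hw with ⟨σ, τ, hσ, hτ, hστ, rfl⟩
        have hTw : T (σ • ((1:ℝ), (1:ℝ)) + τ • ((1:ℝ), (-1:ℝ))) = σ • a + (1 - σ) • b := by
          rw [map_add, map_smul, map_smul, ← had, ← hbd, show τ = 1 - σ by linarith]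
        rw [hTw] at hpC
        have hsub' : ∀ x ∈ C, |x.1 * b.2 - x.2 * b.1| + |a.1 * x.2 - a.2 * x.1|
            ≤ lam * (a.1 * b.2 - a.2 * b.1) := by
          intro x hx
          have h := hmaster x hx
          rwa [abs_of_pos hDpos] at h
        exact main_aux hCc h0 hJC hnegC haC hbC ha' hb' hlam hσ (by linarith) hDpos hc hpC hsub'
      · -- pair (b, -a), contact from side 2
        rcases hsides.2.1 with ⟨p, ⟨q, ⟨w, hw, rfl⟩, rfl⟩, hpC⟩
        rcases hw with ⟨σ, τ, hσ, hτ, hστ, rfl⟩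
        have hTw : T (σ • ((1:ℝ), (-1:ℝ)) + τ • ((-1:ℝ), (-1:ℝ))) = σ • b + (1 - σ) • (-a) := by
          rw [map_add, map_smul, map_smul, ← hbd, hTnn, show τ = 1 - σ by linarith]
        rw [hTw] at hpC
        have hD' : 0 < b.1 * (-a).2 - b.2 * (-a).1 := by
          simp only [Prod.fst_neg, Prod.snd_neg]
          linarith
        have hc' : 0 ≤ b.1 * (-a).1 + b.2 * (-a).2 := by
          simp only [Prod.fst_neg, Prod.snd_neg]
          linarith
        have hsub' : ∀ x ∈ C, |x.1 * (-a).2 - x.2 * (-a).1| + |b.1 * x.2 - b.2 * x.1|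
            ≤ lam * (b.1 * (-a).2 - b.2 * (-a).1) := by
          intro x hx
          have h := hmaster x hx
          simp only [Prod.fst_neg, Prod.snd_neg]
          rw [show x.1 * -a.2 - x.2 * -a.1 = a.1 * x.2 - a.2 * x.1 by ring,
            show b.1 * x.2 - b.2 * x.1 = -(x.1 * b.2 - x.2 * b.1) by ring, abs_neg]
          rw [show |a.1 * b.2 - a.2 * b.1| = b.1 * -a.2 - b.2 * -a.1 by
              rw [abs_of_pos hDpos]; ring] at h
          linarith
        have hres := main_aux hCc h0 hJC hnegC hbC hnaC hb' hna' hlam hσ (by linarith) hD'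
          hc' hpC hsub'
        obtain ⟨h1, h2⟩ := hres
        simp only [Prod.fst_neg, Prod.snd_neg] at h1 h2
        constructor
        · linarith
        · nlinarith [h2]
  have he1 : e₁ = a - b := rfl
  have he2 : e₂ = b + a := by
    show b - T (-1, -1) = b + a
    rw [hTnn, sub_neg_eq_add]
  rw [he1, he2]
  simp only [Prod.fst_sub, Prod.snd_sub, Prod.fst_add, Prod.snd_add]
  constructor
  · linear_combination (-4 : ℝ) * key.1
  · linear_combination key.2
end
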